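/- With G, G' as in the diamond-reduction construction, if G' is isomorphic to K4, then G has exactly eight vertices and is a ring of two diamonds; in particular G then contains an even number of diamonds. -/

import Mathlib

/-!
If `G'` is `K₄`, exactly four vertices `x, y, p, q` lie outside the diamond `a b c d`, and in
`G` they are pairwise adjacent except for `x y`: the pair `x y` carries the new edge of `G'`
(and `x ≠ y`, for otherwise `x` would be adjacent to `a`, `d` and three more vertices). Hence
`y p q x` is a second diamond, attached to the first by the edges `d y` and `x a`, and `G` is
a ring of two diamonds. In a cubic multigraph each diamond is the closed neighbourhood of
either of its middle vertices, and each of its vertices has at most one neighbour outside it;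
so two diamonds sharing a vertex coincide, and the ring has exactly two diamonds.
-/

/-- A multigraph on vertex set `V`: a symmetric edge-multiplicity function with no loops. -/
structure Multigraph (V : Type*) where
  mult : V → V → ℕ
  symm : ∀ u v, mult u v = mult v u
  loopless : ∀ v, mult v v = 0

namespace Multigraph

variable {V : Type*}

/-- Adjacency: distinct vertices joined by at least one edge. -/
def Adj (G : Multigraph V) (u v : V) : Prop := u ≠ v ∧ 0 < G.mult u v

/-- The underlying simple graph. -/
def toSimple (G : Multigraph V) : SimpleGraph V where
  Adj u v := u ≠ v ∧ 0 < G.mult u v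
  symm := ⟨fun u v h => ⟨h.1.symm, by rw [G.symm v u]; exact h.2⟩⟩
  loopless := ⟨fun v h => h.1 rfl⟩

def Connected (G : Multigraph V) : Prop := G.toSimple.Connected

section Fin
variable [Fintype V] [DecidableEq V]

/-- The degree of a vertex, counting edge multiplicities. -/
def degree (G : Multigraph V) (v : V) : ℕ := ∑ u, G.mult v u

def IsCubic (G : Multigraph V) : Prop := ∀ v, G.degree v = 3

end Fin

variable [DecidableEq V]

/-- No induced claw `K_{1,3}` (centre `c`, leaves `a b d`). -/
def IsClawFree (G : Multigraph V) : Prop :=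
  ¬ ∃ c a b d : V, c ≠ a ∧ c ≠ b ∧ c ≠ d ∧ a ≠ b ∧ a ≠ d ∧ b ≠ d ∧
      G.mult c a = 1 ∧ G.mult c b = 1 ∧ G.mult c d = 1 ∧
      G.mult a b = 0 ∧ G.mult a d = 0 ∧ G.mult b d = 0

/-- An induced triangle (cycle of length three, all sides simple edges). -/
def IsTriangle (G : Multigraph V) (a b c : V) : Prop :=
  a ≠ b ∧ a ≠ c ∧ b ≠ c ∧ G.mult a b = 1 ∧ G.mult a c = 1 ∧ G.mult b c = 1

/-- A trumpet: a triangle whose side `ab` is a multiple edge. -/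
def IsTrumpet (G : Multigraph V) (a b c : V) : Prop :=
  a ≠ b ∧ a ≠ c ∧ b ≠ c ∧ G.mult a b = 2 ∧ G.mult a c = 1 ∧ G.mult b c = 1

/-- A digon: two vertices joined by parallel edges. -/
def IsDigon (G : Multigraph V) (u v : V) : Prop := u ≠ v ∧ 2 ≤ G.mult u v

/-- A diamond: an induced `K₄` minus the edge `ad`. -/
def IsDiamond (G : Multigraph V) (a b c d : V) : Prop :=
  a ≠ b ∧ a ≠ c ∧ a ≠ d ∧ b ≠ c ∧ b ≠ d ∧ c ≠ d ∧
  G.mult a d = 0 ∧ G.mult a b = 1 ∧ G.mult a c = 1 ∧ G.mult b c = 1 ∧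
  G.mult b d = 1 ∧ G.mult c d = 1

/-- The vertex sets of the diamonds of `G`. -/
def diamondSets (G : Multigraph V) : Set (Finset V) :=
  {s | ∃ a b c d, s = {a, b, c, d} ∧ G.IsDiamond a b c d}

/-- The number of diamonds of `G`. -/
noncomputable def diamondCount (G : Multigraph V) : ℕ := G.diamondSets.ncard

/-- The vertex sets of the digons of `G` that are not the multiple side of a trumpet. -/
def digonSets (G : Multigraph V) : Set (Finset V) :=
  {s | ∃ u v, s = {u, v} ∧ G.IsDigon u v ∧ ∀ w, ¬ G.IsTrumpet u v w}

/-- The number of digons of `G` (not counting those inside trumpets). -/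
noncomputable def digonCount (G : Multigraph V) : ℕ := G.digonSets.ncard

/-- `G` is (isomorphic to) the simple complete graph `K₄`. -/
def IsK4 (G : Multigraph V) : Prop :=
  Nonempty (G.toSimple ≃g (⊤ : SimpleGraph (Fin 4))) ∧ ∀ u v, G.mult u v ≤ 1

section Bisection
variable [Fintype V]

/-- A bisection: the two parts `B` and `Bᶜ` have the same size. -/
def IsBisection (G : Multigraph V) (B : Finset V) : Prop := B.card = Bᶜ.card

/-- The number of monochromatic edges inside the part `B` (with multiplicity). -/
def monoEdges (G : Multigraph V) (B : Finset V) : ℕ :=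
  (∑ u ∈ B, ∑ v ∈ B, G.mult u v) / 2

/-- The total number of monochromatic edges of the bisection `(B, Bᶜ)`. -/
def epsilon (G : Multigraph V) (B : Finset V) : ℕ := G.monoEdges B + G.monoEdges Bᶜ

/-- The simple graph induced by `G` on the part `B`. -/
def inducedSimple (G : Multigraph V) (B : Finset V) : SimpleGraph V where
  Adj u v := u ≠ v ∧ u ∈ B ∧ v ∈ B ∧ 0 < G.mult u v
  symm := ⟨fun u v h => ⟨h.1.symm, h.2.2.1, h.2.1, by rw [G.symm v u]; exact h.2.2.2⟩⟩
  loopless := ⟨fun v h => h.1 rfl⟩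

/-- Every monochromatic component inside `B` has at most `k` vertices. -/
def SmallComponents (G : Multigraph V) (B : Finset V) (k : ℕ) : Prop :=
  ∀ v ∈ B, {u | (G.inducedSimple B).Reachable v u}.ncard ≤ k

/-- A `k`-bisection. -/
def IsKBisection (G : Multigraph V) (B : Finset V) (k : ℕ) : Prop :=
  G.IsBisection B ∧ G.SmallComponents B k ∧ G.SmallComponents Bᶜ k

/-- A desired bisection: (DB1) exactly one monochromatic edge per triangle, (DB2) every
monochromatic edge lies in a triangle, (DB3) exactly one monochromatic edge per diamond,
(DB4) no multiple edge is monochromatic. -/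
def IsDesired (G : Multigraph V) (B : Finset V) : Prop :=
  G.IsBisection B ∧
  (∀ a b c, G.IsTriangle a b c →
    (({(a, b), (a, c), (b, c)} : Finset (V × V)).filter
      (fun e => e.1 ∈ B ↔ e.2 ∈ B)).card = 1) ∧
  (∀ u v, G.Adj u v → (u ∈ B ↔ v ∈ B) → ∃ w, G.IsTriangle u v w) ∧
  (∀ a b c d, G.IsDiamond a b c d →
    (({(a, b), (a, c), (b, c), (b, d), (c, d)} : Finset (V × V)).filter
      (fun e => e.1 ∈ B ↔ e.2 ∈ B)).card = 1) ∧
  (∀ u v, 2 ≤ G.mult u v → ¬ (u ∈ B ↔ v ∈ B))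

end Bisection

end Multigraph

namespace Multigraph

variable {V : Type*} [DecidableEq V]

/-- Delete all edges between `x` and `y`. -/
def deleteEdge (G : Multigraph V) (x y : V) : Multigraph V where
  mult u v := if (u = x ∧ v = y) ∨ (u = y ∧ v = x) then 0 else G.mult u v
  symm := by
    intro u v
    have hsy := G.symm u v
    by_cases h : (u = x ∧ v = y) ∨ (u = y ∧ v = x)
    · have h' : (v = x ∧ u = y) ∨ (v = y ∧ u = x) := by tauto
      simp [h, h']
    · have h' : ¬ ((v = x ∧ u = y) ∨ (v = y ∧ u = x)) := by tauto
      simp [h, h', hsy]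
  loopless := by
    intro v
    by_cases h : (v = x ∧ v = y) ∨ (v = y ∧ v = x) <;> simp [h, G.loopless]

/-- The diamond reduction: delete the diamond vertices `a b c d` and add one new edge
between the outside neighbours `x` and `y`. -/
def diamondReduce (G : Multigraph V) (a b c d x y : V) :
    Multigraph {v : V // v ∉ ({a, b, c, d} : Finset V)} where
  mult u v := if u.1 ≠ v.1 ∧ ((u.1 = x ∧ v.1 = y) ∨ (u.1 = y ∧ v.1 = x))
    then G.mult u.1 v.1 + 1 else G.mult u.1 v.1
  symm := by
    intro u v
    have hsy := G.symm u.1 v.1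
    by_cases h : u.1 ≠ v.1 ∧ ((u.1 = x ∧ v.1 = y) ∨ (u.1 = y ∧ v.1 = x))
    · have h' : v.1 ≠ u.1 ∧ ((v.1 = x ∧ u.1 = y) ∨ (v.1 = y ∧ u.1 = x)) := by tauto
      simp [h, h', hsy]
    · have h' : ¬ (v.1 ≠ u.1 ∧ ((v.1 = x ∧ u.1 = y) ∨ (v.1 = y ∧ u.1 = x))) := by tauto
      simp [h, h', hsy]
  loopless := by
    intro v
    simp [G.loopless]

/-- A ring of two diamonds: two vertex-disjoint diamonds covering all of `V`, joined
cyclically by two edges between their degree-2 vertices. -/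
def IsRingOfTwoDiamonds (G : Multigraph V) : Prop :=
  ∃ a₁ b₁ c₁ d₁ a₂ b₂ c₂ d₂ : V,
    ([a₁, b₁, c₁, d₁, a₂, b₂, c₂, d₂] : List V).Nodup ∧
    (∀ v : V, v ∈ [a₁, b₁, c₁, d₁, a₂, b₂, c₂, d₂]) ∧
    G.IsDiamond a₁ b₁ c₁ d₁ ∧ G.IsDiamond a₂ b₂ c₂ d₂ ∧
    G.mult d₁ a₂ = 1 ∧ G.mult d₂ a₁ = 1

end Multigraph

namespace Multigraph

variable {V : Type*} {G : Multigraph V}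

theorem sum_mult_le_degree [Fintype V] (G : Multigraph V) (v : V) (s : Finset V) :
    ∑ u ∈ s, G.mult v u ≤ G.degree v :=
  Finset.sum_le_sum_of_subset (Finset.subset_univ s)

namespace IsCubic

variable [Fintype V] [DecidableEq V] {v w₁ w₂ w₃ : V}

theorem mult_eq_one_of_three (hG : G.IsCubic)
    (h₁₂ : w₁ ≠ w₂) (h₁₃ : w₁ ≠ w₃) (h₂₃ : w₂ ≠ w₃)
    (h₁ : 0 < G.mult v w₁) (h₂ : 0 < G.mult v w₂) (h₃ : 0 < G.mult v w₃) :
    G.mult v w₁ = 1 := by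
  have := G.sum_mult_le_degree v {w₁, w₂, w₃}
  rw [Finset.sum_insert (by simp [h₁₂, h₁₃]), Finset.sum_insert (by simp [h₂₃]),
    Finset.sum_singleton, hG v] at this
  omega

theorem mult_eq_zero_of_three (hG : G.IsCubic)
    (h₁₂ : w₁ ≠ w₂) (h₁₃ : w₁ ≠ w₃) (h₂₃ : w₂ ≠ w₃)
    (h₁ : 0 < G.mult v w₁) (h₂ : 0 < G.mult v w₂) (h₃ : 0 < G.mult v w₃)
    {u : V} (hu₁ : u ≠ w₁) (hu₂ : u ≠ w₂) (hu₃ : u ≠ w₃) :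
    G.mult v u = 0 := by
  have := G.sum_mult_le_degree v {u, w₁, w₂, w₃}
  rw [Finset.sum_insert (by simp [hu₁, hu₂, hu₃]),
    Finset.sum_insert (by simp [h₁₂, h₁₃]), Finset.sum_insert (by simp [h₂₃]),
    Finset.sum_singleton, hG v] at this
  omega

end IsCubic

namespace IsDiamond

variable {a b c d : V}

theorem swap_mid (h : G.IsDiamond a b c d) : G.IsDiamond a c b d := by
  obtain ⟨hab, hac, had, hbc, hbd, hcd, mad, mab, mac, mbc, mbd, mcd⟩ := h
  exact ⟨hac, hab, had, hbc.symm, hcd, hbd, mad, mac, mab, G.symm b c ▸ mbc, mcd, mbd⟩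

theorem reverse (h : G.IsDiamond a b c d) : G.IsDiamond d b c a := by
  obtain ⟨hab, hac, had, hbc, hbd, hcd, mad, mab, mac, mbc, mbd, mcd⟩ := h
  exact ⟨hbd.symm, hcd.symm, had.symm, hbc, hab.symm, hac.symm, G.symm a d ▸ mad,
    G.symm b d ▸ mbd, G.symm c d ▸ mcd, mbc, G.symm a b ▸ mab, G.symm a c ▸ mac⟩

theorem nodup (h : G.IsDiamond a b c d) : [a, b, c, d].Nodup := by
  obtain ⟨hab, hac, had, hbc, hbd, hcd, -⟩ := h
  simp [hab, hac, had, hbc, hbd, hcd]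

end IsDiamond

namespace IsK4

variable {W : Type*} {H : Multigraph W}

theorem card_eq_four [Fintype W] (h : H.IsK4) : Fintype.card W = 4 :=
  (Fintype.card_congr h.1.some.toEquiv).trans (Fintype.card_fin 4)

theorem mult_eq_one (h : H.IsK4) {u v : W} (huv : u ≠ v) : H.mult u v = 1 := by
  obtain ⟨⟨e⟩, hle⟩ := h
  have hadj : H.toSimple.Adj u v := e.map_adj_iff.1 (by simpa using e.injective.ne huv)
  exact le_antisymm (hle u v) hadj.2

end IsK4

section DiamondReduce

variable [DecidableEq V] {a b c d x y : V}

theorem mult_eq_one_of_diamondReduce_isK4 (h : (G.diamondReduce a b c d x y).IsK4) {u v : V}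
    (hu : u ∉ ({a, b, c, d} : Finset V)) (hv : v ∉ ({a, b, c, d} : Finset V)) (huv : u ≠ v)
    (hvx : v ≠ x) (hvy : v ≠ y) : G.mult u v = 1 := by
  have := h.mult_eq_one (u := ⟨u, hu⟩) (v := ⟨v, hv⟩) (by simpa using huv)
  simpa [diamondReduce, hvx, hvy] using this

theorem mult_eq_zero_of_diamondReduce_isK4 (h : (G.diamondReduce a b c d x y).IsK4)
    (hx : x ∉ ({a, b, c, d} : Finset V)) (hy : y ∉ ({a, b, c, d} : Finset V)) (hxy : x ≠ y) :
    G.mult x y = 0 := by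
  have := h.mult_eq_one (u := ⟨x, hx⟩) (v := ⟨y, hy⟩) (by simpa using hxy)
  simpa [diamondReduce, hxy] using this

end DiamondReduce

variable [Fintype V] [DecidableEq V]

def closedNbhd (G : Multigraph V) (v : V) : Finset V :=
  insert v (Finset.univ.filter fun u => 0 < G.mult v u)

namespace IsDiamond

variable {a b c d a' b' c' d' : V}

theorem eq_of_mult_mid_pos (hG : G.IsCubic) (h : G.IsDiamond a b c d) {u : V}
    (hu : 0 < G.mult b u) : u = a ∨ u = c ∨ u = d := by
  obtain ⟨hab, hac, had, hbc, hbd, hcd, -, mab, -, mbc, mbd, -⟩ := h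
  by_contra! hne
  have := hG.mult_eq_zero_of_three hac had hcd (G.symm a b ▸ mab).ge mbc.ge mbd.ge
    hne.1 hne.2.1 hne.2.2
  omega

theorem eq_mid_of_mult_end_pos (hG : G.IsCubic) (h : G.IsDiamond a b c d) {u v : V}
    (hu : 0 < G.mult a u) (hv : 0 < G.mult a v) (huv : u ≠ v) :
    u = b ∨ u = c ∨ v = b ∨ v = c := by
  obtain ⟨-, -, -, hbc, -, -, -, mab, mac, -⟩ := h
  by_contra! hne
  have := hG.mult_eq_zero_of_three hbc hne.1.symm hne.2.1.symm mab.ge mac.ge hu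
    hne.2.2.1 hne.2.2.2 huv.symm
  omega

theorem mult_end_eq_one (hG : G.IsCubic) (h : G.IsDiamond a b c d) {u : V}
    (hu : 0 < G.mult a u) (hub : u ≠ b) (huc : u ≠ c) : G.mult a u = 1 := by
  obtain ⟨-, -, -, hbc, -, -, -, mab, mac, -⟩ := h
  exact hG.mult_eq_one_of_three hub huc hbc hu mab.ge mac.ge

theorem closedNbhd_mid (hG : G.IsCubic) (h : G.IsDiamond a b c d) :
    G.closedNbhd b = {a, b, c, d} := by
  ext u
  simp only [closedNbhd, Finset.mem_insert, Finset.mem_filter, Finset.mem_univ, true_and,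
    Finset.mem_singleton]
  constructor
  · rintro (rfl | hu)
    · tauto
    · rcases h.eq_of_mult_mid_pos hG hu with rfl | rfl | rfl <;> tauto
  · obtain ⟨-, -, -, -, -, -, -, mab, -, mbc, mbd, -⟩ := h
    rintro (rfl | rfl | rfl | rfl)
    · exact Or.inr (by rw [G.symm, mab]; exact Nat.one_pos)
    · exact Or.inl rfl
    · exact Or.inr (by rw [mbc]; exact Nat.one_pos)
    · exact Or.inr (by rw [mbd]; exact Nat.one_pos)

theorem closedNbhd_of_mid (hG : G.IsCubic) (h : G.IsDiamond a b c d) {m : V}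
    (hm : m = b ∨ m = c) : G.closedNbhd m = {a, b, c, d} := by
  rcases hm with rfl | rfl
  · exact h.closedNbhd_mid hG
  · rw [h.swap_mid.closedNbhd_mid hG, Finset.insert_comm m]

theorem mem_or_mem_of_mult_pos (hG : G.IsCubic) (h : G.IsDiamond a b c d) {w u v : V}
    (hw : w ∈ ({a, b, c, d} : Finset V)) (hu : 0 < G.mult w u) (hv : 0 < G.mult w v)
    (huv : u ≠ v) : u ∈ ({a, b, c, d} : Finset V) ∨ v ∈ ({a, b, c, d} : Finset V) := by
  simp only [Finset.mem_insert, Finset.mem_singleton] at hw ⊢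
  rcases hw with rfl | rfl | rfl | rfl
  · rcases h.eq_mid_of_mult_end_pos hG hu hv huv with h | h | h | h <;> simp [h]
  · rcases h.eq_of_mult_mid_pos hG hu with h | h | h <;> simp [h]
  · rcases h.swap_mid.eq_of_mult_mid_pos hG hu with h | h | h <;> simp [h]
  · rcases h.reverse.eq_mid_of_mult_end_pos hG hu hv huv with h | h | h | h <;> simp [h]

theorem mid_eq_mid_of_mid_eq_end (hG : G.IsCubic) (h : G.IsDiamond a b c d)
    (h' : G.IsDiamond a' b' c' d') (hb' : b' = a) : c' = b ∨ c' = c := by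
  -- `a'` and `c'` are two neighbours of the end `a`, so `a'` is a middle vertex; its
  -- neighbour `c'` must then be `d`, which is not adjacent to `a = b'`.
  subst hb'
  obtain ⟨-, hac', -, hbc', -, -, -, mab', mac', mbc', -, -⟩ := h'
  by_contra! hc'
  have hca' : 0 < G.mult a' c' := by omega
  have ha' : a' = b ∨ a' = c := by
    have := h.eq_mid_of_mult_end_pos hG (u := a') (by rw [G.symm]; omega) (by omega) hac'
    tauto
  have hc'd : c' = d := by
    rcases ha' with rfl | rfl
    · have := h.eq_of_mult_mid_pos hG hca'
      tauto
    · have := h.swap_mid.eq_of_mult_mid_pos hG hca'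
      tauto
  obtain ⟨-, -, -, -, -, -, mad, -⟩ := h
  subst hc'd
  omega

theorem mid_eq_mid_of_mid_mem (hG : G.IsCubic) (h : G.IsDiamond a b c d)
    (h' : G.IsDiamond a' b' c' d') (hb' : b' ∈ ({a, b, c, d} : Finset V)) :
    (b' = b ∨ b' = c) ∨ (c' = b ∨ c' = c) := by
  simp only [Finset.mem_insert, Finset.mem_singleton] at hb'
  rcases hb' with hb' | hb' | hb' | hb'
  · exact Or.inr (h.mid_eq_mid_of_mid_eq_end hG h' hb')
  · exact Or.inl (Or.inl hb')
  · exact Or.inl (Or.inr hb')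
  · exact Or.inr (h.reverse.mid_eq_mid_of_mid_eq_end hG h' hb')

theorem vertexSet_eq_of_mid_mem (hG : G.IsCubic) (h : G.IsDiamond a b c d)
    (h' : G.IsDiamond a' b' c' d') (hb' : b' ∈ ({a, b, c, d} : Finset V)) :
    ({a', b', c', d'} : Finset V) = {a, b, c, d} := by
  rcases h.mid_eq_mid_of_mid_mem hG h' hb' with hm | hm
  · rw [← h'.closedNbhd_mid hG, h.closedNbhd_of_mid hG hm]
  · rw [← h'.closedNbhd_of_mid hG (Or.inr rfl), h.closedNbhd_of_mid hG hm]

theorem vertexSet_eq_of_mem (hG : G.IsCubic) (h : G.IsDiamond a b c d)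
    (h' : G.IsDiamond a' b' c' d') {v : V} (hv : v ∈ ({a, b, c, d} : Finset V))
    (hv' : v ∈ ({a', b', c', d'} : Finset V)) :
    ({a', b', c', d'} : Finset V) = {a, b, c, d} := by
  have hmid : b' ∈ ({a, b, c, d} : Finset V) ∨ c' ∈ ({a, b, c, d} : Finset V) := by
    obtain ⟨-, -, -, hbc', -, -, -, mab', mac', -, mbd', mcd'⟩ := h'
    simp only [Finset.mem_insert, Finset.mem_singleton] at hv'
    rcases hv' with rfl | rfl | rfl | rfl
    · exact h.mem_or_mem_of_mult_pos hG hv (by omega) (by omega) hbc'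
    · exact Or.inl hv
    · exact Or.inr hv
    · exact h.mem_or_mem_of_mult_pos hG hv (by rw [G.symm]; omega) (by rw [G.symm]; omega)
        hbc'
  rcases hmid with hb' | hc'
  · exact h.vertexSet_eq_of_mid_mem hG h' hb'
  · rw [Finset.insert_comm b', ← h.vertexSet_eq_of_mid_mem hG h'.swap_mid hc']

end IsDiamond

namespace IsRingOfTwoDiamonds

theorem card_eq_eight (h : G.IsRingOfTwoDiamonds) : Fintype.card V = 8 := by
  obtain ⟨a₁, b₁, c₁, d₁, a₂, b₂, c₂, d₂, hnd, hall, -⟩ := h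
  rw [← Finset.card_univ, ← Finset.eq_univ_of_forall fun v => List.mem_toFinset.2 (hall v),
    List.toFinset_card_of_nodup hnd]
  rfl

theorem diamondCount_eq_two (hG : G.IsCubic) (h : G.IsRingOfTwoDiamonds) :
    G.diamondCount = 2 := by
  obtain ⟨a₁, b₁, c₁, d₁, a₂, b₂, c₂, d₂, hnd, hall, h₁, h₂, -⟩ := h
  have hne : ({a₁, b₁, c₁, d₁} : Finset V) ≠ {a₂, b₂, c₂, d₂} := by
    intro heq
    have ha₁ : a₁ ∈ ({a₂, b₂, c₂, d₂} : Finset V) := heq ▸ Finset.mem_insert_self _ _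
    simp only [Finset.mem_insert, Finset.mem_singleton] at ha₁
    simp_all
  have hsets : G.diamondSets = {{a₁, b₁, c₁, d₁}, {a₂, b₂, c₂, d₂}} := by
    ext s
    constructor
    · rintro ⟨a, b, c, d, rfl, h⟩
      have ha : a ∈ ({a₁, b₁, c₁, d₁} : Finset V) ∨ a ∈ ({a₂, b₂, c₂, d₂} : Finset V) := by
        have := hall a
        simp only [List.mem_cons, List.not_mem_nil, or_false] at this
        simp only [Finset.mem_insert, Finset.mem_singleton]
        tauto
      rcases ha with ha | ha
      · exact Or.inl (h₁.vertexSet_eq_of_mem hG h ha (by simp))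
      · exact Or.inr (h₂.vertexSet_eq_of_mem hG h ha (by simp))
    · rintro (rfl | rfl)
      exacts [⟨_, _, _, _, rfl, h₁⟩, ⟨_, _, _, _, rfl, h₂⟩]
  rw [diamondCount, hsets, Set.ncard_pair hne]

end IsRingOfTwoDiamonds

section DiamondReduce

variable {a b c d x y : V}

theorem card_compl_of_diamondReduce_isK4 (h : (G.diamondReduce a b c d x y).IsK4) :
    ({a, b, c, d} : Finset V)ᶜ.card = 4 := by
  rw [← h.card_eq_four, Fintype.card_subtype]
  congr 1
  ext v
  simp

theorem exists_diamond_of_diamondReduce_isK4 (hG : G.IsCubic) (had : a ≠ d)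
    (hx : G.Adj a x) (hxo : x ∉ ({a, b, c, d} : Finset V))
    (hy : G.Adj d y) (hyo : y ∉ ({a, b, c, d} : Finset V))
    (hK4 : (G.diamondReduce a b c d x y).IsK4) :
    ∃ p q, p ∉ ({a, b, c, d} : Finset V) ∧ q ∉ ({a, b, c, d} : Finset V) ∧
      G.IsDiamond y p q x ∧
      ∀ v ∉ ({a, b, c, d} : Finset V), v = y ∨ v = p ∨ v = q ∨ v = x := by
  have hcard : 1 < (({a, b, c, d} : Finset V)ᶜ \ {x, y}).card := by
    have := Finset.le_card_sdiff {x, y} ({a, b, c, d} : Finset V)ᶜ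
    have := Finset.card_le_two (a := x) (b := y)
    rw [card_compl_of_diamondReduce_isK4 hK4] at *
    omega
  obtain ⟨p, hp, q, hq, hpq⟩ := Finset.one_lt_card.1 hcard
  simp only [Finset.mem_sdiff, Finset.mem_compl] at hp hq
  obtain ⟨hpo, hpxy⟩ := hp
  obtain ⟨hqo, hqxy⟩ := hq
  simp only [Finset.mem_insert, Finset.mem_singleton, not_or] at hpxy hqxy
  obtain ⟨hpx, hpy⟩ := hpxy
  obtain ⟨hqx, hqy⟩ := hqxy
  have hxp := mult_eq_one_of_diamondReduce_isK4 hK4 hxo hpo (Ne.symm hpx) hpx hpy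
  have hxq := mult_eq_one_of_diamondReduce_isK4 hK4 hxo hqo (Ne.symm hqx) hqx hqy
  have hyp := mult_eq_one_of_diamondReduce_isK4 hK4 hyo hpo (Ne.symm hpy) hpx hpy
  have hyq := mult_eq_one_of_diamondReduce_isK4 hK4 hyo hqo (Ne.symm hqy) hqx hqy
  have hpq' := mult_eq_one_of_diamondReduce_isK4 hK4 hpo hqo hpq hqx hqy
  have hap : a ≠ p := by rintro rfl; simp at hpo
  have haq : a ≠ q := by rintro rfl; simp at hqo
  have hx_nbrs : ∀ u, u ≠ a → u ≠ p → u ≠ q → G.mult x u = 0 :=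
    fun u => hG.mult_eq_zero_of_three hap haq hpq (by rw [G.symm]; exact hx.2) hxp.ge hxq.ge
  have hxy : x ≠ y := by
    rintro rfl
    have := hx_nbrs d had.symm (by rintro rfl; simp at hpo) (by rintro rfl; simp at hqo)
    have := hy.2
    rw [G.symm] at this
    omega
  refine ⟨p, q, hpo, hqo, ⟨Ne.symm hpy, Ne.symm hqy, hxy.symm, hpq, hpx, hqx,
    G.symm x y ▸ mult_eq_zero_of_diamondReduce_isK4 hK4 hxo hyo hxy, hyp, hyq, hpq',
    G.symm x p ▸ hxp, G.symm x q ▸ hxq⟩, fun v hvo => ?_⟩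
  by_contra! hv
  have := hx_nbrs v (by rintro rfl; simp at hvo) hv.2.1 hv.2.2.1
  have := mult_eq_one_of_diamondReduce_isK4 hK4 hxo hvo (Ne.symm hv.2.2.2) hv.2.2.2 hv.1
  omega

theorem isRingOfTwoDiamonds_of_diamondReduce_isK4 (hG : G.IsCubic) (h : G.IsDiamond a b c d)
    (hx : G.Adj a x) (hxo : x ∉ ({a, b, c, d} : Finset V))
    (hy : G.Adj d y) (hyo : y ∉ ({a, b, c, d} : Finset V))
    (hK4 : (G.diamondReduce a b c d x y).IsK4) : G.IsRingOfTwoDiamonds := by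
  obtain ⟨p, q, hpo, hqo, h₂, hcover⟩ :=
    exists_diamond_of_diamondReduce_isK4 hG h.2.2.1 hx hxo hy hyo hK4
  refine ⟨a, b, c, d, y, p, q, x, ?_, fun v => ?_, h, h₂, ?_, ?_⟩
  · refine List.nodup_append.2 ⟨h.nodup, h₂.nodup, ?_⟩
    rintro u hu w hw rfl
    simp only [List.mem_cons, List.not_mem_nil, or_false] at hu hw
    have hu : u ∈ ({a, b, c, d} : Finset V) := by simpa using hu
    rcases hw with rfl | rfl | rfl | rfl <;> contradiction
  · by_cases hv : v ∈ ({a, b, c, d} : Finset V)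
    · simp only [Finset.mem_insert, Finset.mem_singleton] at hv
      simp only [List.mem_cons, List.not_mem_nil, or_false]
      tauto
    · simp only [List.mem_cons, List.not_mem_nil, or_false]
      have := hcover v hv
      tauto
  · exact h.reverse.mult_end_eq_one hG hy.2 (by rintro rfl; simp at hyo)
      (by rintro rfl; simp at hyo)
  · rw [G.symm]
    exact h.mult_end_eq_one hG hx.2 (by rintro rfl; simp at hxo) (by rintro rfl; simp at hxo)

end DiamondReduce

end Multigraph

theorem stmt14_general {V : Type*} [Fintype V] [DecidableEq V] (G : Multigraph V)
    (hcubic : G.IsCubic) (a b c d x y : V) (hdiam : G.IsDiamond a b c d)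
    (hx : G.Adj a x) (hxo : x ∉ ({a, b, c, d} : Finset V))
    (hy : G.Adj d y) (hyo : y ∉ ({a, b, c, d} : Finset V))
    (hK4' : (G.diamondReduce a b c d x y).IsK4) :
    Fintype.card V = 8 ∧ G.IsRingOfTwoDiamonds ∧ Even G.diamondCount := by
  have hring :=
    Multigraph.isRingOfTwoDiamonds_of_diamondReduce_isK4 hcubic hdiam hx hxo hy hyo hK4'
  refine ⟨hring.card_eq_eight, hring, ?_⟩
  rw [hring.diamondCount_eq_two hcubic]
  exact even_two

/-- If the diamond reduction `G'` is isomorphic to `K₄`, then `G` has exactly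
eight vertices and is a ring of two diamonds; in particular the number of diamonds of `G`
is even. -/
theorem stmt14 {V : Type*} [Fintype V] [DecidableEq V] (G : Multigraph V)
    (hconn : G.Connected) (hclaw : G.IsClawFree) (hcubic : G.IsCubic)
    (hK4 : ¬ G.IsK4) (a b c d x y : V) (hdiam : G.IsDiamond a b c d)
    (hx : G.Adj a x) (hxo : x ∉ ({a, b, c, d} : Finset V))
    (hy : G.Adj d y) (hyo : y ∉ ({a, b, c, d} : Finset V))
    (hK4' : (G.diamondReduce a b c d x y).IsK4) :
    Fintype.card V = 8 ∧ G.IsRingOfTwoDiamonds ∧ Even G.diamondCount :=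
  stmt14_general G hcubic a b c d x y hdiam hx hxo hy hyo hK4'
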